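/- arXiv:2602.22166 — 2 statements merged into one kernel-verified Lean document; each statement's English description precedes it below -/
import Mathlib

section
/- For all real numbers r, s with r ≥ 0 and s > 0, the scalar relative Boltzmann entropy satisfies r·log(r/s) − r + s ≥ (√r − √s)², where for r = 0 the term r·log(r/s) is interpreted as 0. -/
/-- Scalar relative Boltzmann entropy inequality:
for `r ≥ 0`, `s > 0`, `r·log(r/s) − r + s ≥ (√r − √s)²`
(with `r·log(r/s) = 0` when `r = 0`, which matches `Real.log 0 = 0`). -/
theorem scalar_relative_entropy_ge_sqrt_sq (r s : ℝ) (hr : 0 ≤ r) (hs : 0 < s) :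
    (Real.sqrt r - Real.sqrt s) ^ 2 ≤ r * Real.log (r / s) - r + s := by
  rcases eq_or_lt_of_le hr with h0 | hrpos
  · simp [← h0, Real.sq_sqrt hs.le]
  · set x := Real.sqrt r with hx
    set y := Real.sqrt s with hy
    have hxpos : 0 < x := Real.sqrt_pos.mpr hrpos
    have hypos : 0 < y := Real.sqrt_pos.mpr hs
    have hlog : Real.log (y / x) ≤ y / x - 1 := Real.log_le_sub_one_of_pos (by positivity)
    have hlog2 : 1 - y / x ≤ Real.log (x / y) := by
      rw [Real.log_div hypos.ne' hxpos.ne'] at hlog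
      rw [Real.log_div hxpos.ne' hypos.ne']
      linarith
    have key : x - y ≤ x * Real.log (x / y) := by
      have := mul_le_mul_of_nonneg_left hlog2 hxpos.le
      rw [mul_sub, mul_one, mul_div_cancel₀ _ hxpos.ne'] at this
      linarith
    have hr' : r = x ^ 2 := (Real.sq_sqrt hrpos.le).symm
    have hs' : s = y ^ 2 := (Real.sq_sqrt hs.le).symm
    have hlogrs : Real.log (r / s) = 2 * Real.log (x / y) := by
      rw [hr', hs', ← div_pow, Real.log_pow]
      push_cast; ring
    rw [hlogrs, hr', hs']
    nlinarith [mul_le_mul_of_nonneg_left key hxpos.le]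
end

section
/- Fix ι > 0 and E > 0. There exists a constant c > 0 (depending only on ι, E, n) such that for all u, U ∈ [0,∞)^n with Uᵢ ≥ ι for all i and ∑ᵢ uᵢ ≤ E, ∑ᵢ Uᵢ ≤ E, the relative entropy satisfies h_rel(u|U) := ∑ᵢ (uᵢ log(uᵢ/Uᵢ) − uᵢ + Uᵢ) ≥ c ∑ᵢ (√uᵢ − √Uᵢ)², with uᵢ log(uᵢ/Uᵢ) interpreted as 0 when uᵢ = 0. -/
lemma relent_term (a b : ℝ) (ha : 0 ≤ a) (hb : 0 < b) :
    (Real.sqrt a - Real.sqrt b) ^ 2 ≤ a * Real.log (a / b) - a + b := by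
  rcases eq_or_lt_of_le ha with h | h
  · rw [← h]
    simp [sub_sq, Real.sq_sqrt hb.le]
  · have hsa := Real.sqrt_pos.mpr h
    have hsb := Real.sqrt_pos.mpr hb
    have hlog : Real.log (Real.sqrt b / Real.sqrt a) ≤ Real.sqrt b / Real.sqrt a - 1 :=
      Real.log_le_sub_one_of_pos (by positivity)
    have hlog2 : Real.log (Real.sqrt b / Real.sqrt a)
        = - Real.log (Real.sqrt a / Real.sqrt b) := by
      rw [Real.log_div hsb.ne' hsa.ne', Real.log_div hsa.ne' hsb.ne']; ring
    have key : Real.sqrt a - Real.sqrt b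
        ≤ Real.sqrt a * Real.log (Real.sqrt a / Real.sqrt b) := by
      rw [hlog2] at hlog
      have := mul_le_mul_of_nonneg_left hlog hsa.le
      have hd : Real.sqrt a * (Real.sqrt b / Real.sqrt a) = Real.sqrt b := by
        field_simp
      nlinarith
    have hab : Real.log (a / b) = 2 * Real.log (Real.sqrt a / Real.sqrt b) := by
      rw [Real.log_div h.ne' hb.ne', Real.log_div hsa.ne' hsb.ne',
        Real.log_sqrt ha, Real.log_sqrt hb.le]
      ring
    have h1 : Real.sqrt a ^ 2 = a := Real.sq_sqrt ha
    have h2 : Real.sqrt b ^ 2 = b := Real.sq_sqrt hb.le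
    have t1 : Real.sqrt a * (Real.sqrt a - Real.sqrt b)
        ≤ a * Real.log (Real.sqrt a / Real.sqrt b) := by
      calc Real.sqrt a * (Real.sqrt a - Real.sqrt b)
          ≤ Real.sqrt a * (Real.sqrt a * Real.log (Real.sqrt a / Real.sqrt b)) :=
            mul_le_mul_of_nonneg_left key hsa.le
        _ = (Real.sqrt a * Real.sqrt a) * Real.log (Real.sqrt a / Real.sqrt b) := by ring
        _ = a * Real.log (Real.sqrt a / Real.sqrt b) := by rw [Real.mul_self_sqrt ha]
    rw [hab]
    nlinarith [t1, h1, h2]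

/-- Local strong coercivity of the Boltzmann relative entropy on the truncated region:
there is `c > 0` such that `h_rel(u|U) ≥ c ∑ (√uᵢ − √Uᵢ)²` whenever `Uᵢ ≥ ι`
and both `|u|₁, |U|₁ ≤ E`. -/
theorem relative_entropy_coercive (n : ℕ) (ι E : ℝ) (hι : 0 < ι) (hE : 0 < E) :
    ∃ c > 0, ∀ u U : Fin n → ℝ,
      (∀ i, 0 ≤ u i) → (∀ i, ι ≤ U i) →
      (∑ i, u i) ≤ E → (∑ i, U i) ≤ E →
      c * ∑ i, (Real.sqrt (u i) - Real.sqrt (U i)) ^ 2 ≤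
        ∑ i, (u i * Real.log (u i / U i) - u i + U i) := by
  refine ⟨1, one_pos, fun u U hu hU _ _ => ?_⟩
  rw [one_mul]
  exact Finset.sum_le_sum fun i _ => relent_term (u i) (U i) (hu i) (hι.trans_le (hU i))
end
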